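/- If a cycle C in a graph has length ℓ ≥ m and F is a set of edges of C whose pairwise distance along the graph is at least m, then |F| ≤ ⌊ℓ/m⌋. -/

import Mathlib

open Finset

section Aux

variable {V : Type*} {G : SimpleGraph V} {u v : V}

lemma my_edges_getElem (w : G.Walk u v) (i : ℕ) (hi : i < w.length) :
    w.edges[i]'(by rw [SimpleGraph.Walk.length_edges]; exact hi)
      = s(w.getVert i, w.getVert (i+1)) := by
  induction w generalizing i with
  | nil => simp at hi
  | cons h p ih =>
    cases i with
    | zero => simp [SimpleGraph.Walk.getVert_cons_succ]
    | succ n =>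
      simp only [SimpleGraph.Walk.edges_cons, List.getElem_cons_succ,
        SimpleGraph.Walk.getVert_cons_succ]
      exact ih n (by simpa using hi)

lemma my_edist_getVert_le (w : G.Walk u v) {a b : ℕ} (hab : a ≤ b) (hb : b ≤ w.length) :
    G.edist (w.getVert a) (w.getVert b) ≤ ((b - a : ℕ) : ℕ∞) := by
  induction b, hab using Nat.le_induction with
  | base => simp [SimpleGraph.edist_self]
  | succ b hab ih =>
    have hadj : G.Adj (w.getVert b) (w.getVert (b+1)) :=
      w.adj_getVert_succ (by omega)
    have h1 : G.edist (w.getVert b) (w.getVert (b+1)) ≤ 1 := by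
      rw [SimpleGraph.edist_eq_one_iff_adj.2 hadj]
    calc G.edist (w.getVert a) (w.getVert (b+1))
        ≤ G.edist (w.getVert a) (w.getVert b) + G.edist (w.getVert b) (w.getVert (b+1)) :=
          SimpleGraph.edist_triangle
      _ ≤ ((b - a : ℕ) : ℕ∞) + 1 := add_le_add (ih (by omega)) h1
      _ = ((b + 1 - a : ℕ) : ℕ∞) := by
          rw [← Nat.cast_one, ← Nat.cast_add]; congr 1; omega

lemma my_dist_getVert_le (w : G.Walk u v) {a b : ℕ} (hab : a ≤ b) (hb : b ≤ w.length) :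
    G.dist (w.getVert a) (w.getVert b) ≤ b - a := by
  have := my_edist_getVert_le w hab hb
  have h2 : (G.edist (w.getVert a) (w.getVert b)).toNat ≤ ((b - a : ℕ) : ℕ∞).toNat :=
    ENat.toNat_le_toNat this (by simp)
  rw [ENat.toNat_coe] at h2; exact h2

lemma my_dist_getVert_wrap (w : G.Walk u u) {a b : ℕ} (hab : a ≤ b) (hb : b ≤ w.length) :
    G.dist (w.getVert a) (w.getVert b) ≤ w.length - b + a := by
  have e1 : G.edist (w.getVert a) u ≤ (a : ℕ∞) := by
    have := my_edist_getVert_le w (Nat.zero_le a) (le_trans hab hb)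
    rw [SimpleGraph.Walk.getVert_zero] at this
    simpa [SimpleGraph.edist_comm] using this
  have e2 : G.edist u (w.getVert b) ≤ ((w.length - b : ℕ) : ℕ∞) := by
    have := my_edist_getVert_le w hb (le_refl w.length)
    rw [SimpleGraph.Walk.getVert_length] at this
    simpa [SimpleGraph.edist_comm] using this
  have e3 : G.edist (w.getVert a) (w.getVert b) ≤ ((w.length - b + a : ℕ) : ℕ∞) := by
    calc G.edist (w.getVert a) (w.getVert b)
        ≤ G.edist (w.getVert a) u + G.edist u (w.getVert b) := SimpleGraph.edist_triangle
      _ ≤ (a : ℕ∞) + ((w.length - b : ℕ) : ℕ∞) := add_le_add e1 e2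
      _ = ((w.length - b + a : ℕ) : ℕ∞) := by rw [← Nat.cast_add]; congr 1; omega
  have h2 : (G.edist (w.getVert a) (w.getVert b)).toNat ≤ ((w.length - b + a : ℕ) : ℕ∞).toNat :=
    ENat.toNat_le_toNat e3 (ENat.coe_ne_top _)
  rw [ENat.toNat_coe] at h2; exact h2

end Aux

/-- If `C` is a cycle of length `ℓ ≥ m` in a finite graph `G` and `F` is a set of edges
of `C` whose pairwise distance in `G` (the minimum over endpoints of the graph
distance) is at least `m ≥ 1`, then `|F| ≤ ⌊ℓ/m⌋`. -/
theorem spaced_edges_on_cycle {V : Type*} [Fintype V] [DecidableEq V]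
    (G : SimpleGraph V) (u : V) (c : G.Walk u u) (hc : c.IsCycle)
    (m : ℕ) (hm : 1 ≤ m) (hl : m ≤ c.length)
    (F : Finset (Sym2 V)) (hF : ∀ f ∈ F, f ∈ c.edges)
    (hdist : ∀ e ∈ F, ∀ f ∈ F, e ≠ f →
      ∀ a ∈ e, ∀ b ∈ f, m ≤ G.dist a b) :
    F.card ≤ c.length / m := by
  classical
  set ℓ := c.length with hℓ
  have hℓ0 : 0 < ℓ := by omega
  have hlenE : c.edges.length = ℓ := c.length_edges
  set idx : Sym2 V → ℕ := fun f => c.edges.idxOf f with hidx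
  have hidxlt : ∀ f ∈ F, idx f < ℓ := fun f hf => by
    rw [← hlenE]; exact List.idxOf_lt_length_iff.2 (hF f hf)
  have hget : ∀ f (hf : f ∈ F),
      c.edges[idx f]'(by rw [hlenE]; exact hidxlt f hf) = f := by
    intro f hf
    exact List.getElem_idxOf _
  have key : ∀ e ∈ F, ∀ f ∈ F, idx e < idx f →
      idx e + m < idx f ∧ idx f + m < ℓ + idx e := by
    intro e he f hf hij
    obtain ⟨i, hi⟩ : ∃ n, idx e = n := ⟨_, rfl⟩
    obtain ⟨j, hj⟩ : ∃ n, idx f = n := ⟨_, rfl⟩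
    rw [hi, hj] at hij ⊢
    have hiℓ : i < ℓ := hi ▸ hidxlt e he
    have hjℓ : j < ℓ := hj ▸ hidxlt f hf
    have hef : e ≠ f := fun h => absurd hij (by rw [← hi, ← hj, h]; exact lt_irrefl _)
    have hei : e = s(c.getVert i, c.getVert (i + 1)) := by
      rw [← hi]
      conv_lhs => rw [← hget e he]
      exact my_edges_getElem c (idx e) (hidxlt e he)
    have hfj : f = s(c.getVert j, c.getVert (j + 1)) := by
      rw [← hj]
      conv_lhs => rw [← hget f hf]
      exact my_edges_getElem c (idx f) (hidxlt f hf)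
    have hmem1 : c.getVert (i + 1) ∈ e := by rw [hei]; exact Sym2.mem_mk_right _ _
    have hmem2 : c.getVert j ∈ f := by rw [hfj]; exact Sym2.mem_mk_left _ _
    have hmem3 : c.getVert i ∈ e := by rw [hei]; exact Sym2.mem_mk_left _ _
    have hmem4 : c.getVert (j + 1) ∈ f := by rw [hfj]; exact Sym2.mem_mk_right _ _
    constructor
    · have h1 : m ≤ G.dist (c.getVert (i + 1)) (c.getVert j) :=
        hdist e he f hf hef _ hmem1 _ hmem2
      have h2 : G.dist (c.getVert (i + 1)) (c.getVert j) ≤ j - (i + 1) :=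
        my_dist_getVert_le c (by omega) (by omega)
      omega
    · have h1 : m ≤ G.dist (c.getVert i) (c.getVert (j + 1)) :=
        hdist e he f hf hef _ hmem3 _ hmem4
      have h2 : G.dist (c.getVert i) (c.getVert (j + 1)) ≤ ℓ - (j + 1) + i :=
        my_dist_getVert_wrap c (by omega) (by omega)
      omega
  have hinj : Set.InjOn idx F := by
    intro e he f hf h
    have h1 : c.edges[idx e]'(by rw [hlenE]; exact hidxlt e he) = e := hget e he
    have h2 : c.edges[idx f]'(by rw [hlenE]; exact hidxlt f hf) = f := hget f hf
    rw [← h1, ← h2]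
    congr 1
  set I : Finset ℕ := F.image idx with hI
  have hcardI : I.card = F.card := Finset.card_image_of_injOn hinj
  have hIkey : ∀ i ∈ I, ∀ j ∈ I, i < j → i + m < j ∧ j + m < ℓ + i := by
    intro i hi j hj hij
    obtain ⟨e, he, rfl⟩ := Finset.mem_image.1 hi
    obtain ⟨f, hf, rfl⟩ := Finset.mem_image.1 hj
    exact key e he f hf hij
  have hIlt : ∀ i ∈ I, i < ℓ := by
    intro i hi
    obtain ⟨e, he, rfl⟩ := Finset.mem_image.1 hi
    exact hidxlt e he
  set B : ℕ → Finset ℕ := fun i => (Finset.range m).image (fun t => (i + t) % ℓ) with hB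
  have hBcard : ∀ i, (B i).card = m := by
    intro i
    rw [hB]
    rw [Finset.card_image_of_injOn, Finset.card_range]
    intro t ht s hs hts
    simp only [Finset.coe_range, Set.mem_Iio] at ht hs
    have heq : (i + t) % ℓ = (i + s) % ℓ := hts
    rcases le_total t s with h | h
    · have hd : ℓ ∣ (i + s) - (i + t) := (Nat.modEq_iff_dvd' (by omega)).1 heq
      obtain ⟨k, hk⟩ := hd
      have hb : ℓ * k < ℓ * 1 := by omega
      have : k < 1 := lt_of_mul_lt_mul_left hb (Nat.zero_le ℓ)
      interval_cases k <;> omega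
    · have hd : ℓ ∣ (i + t) - (i + s) := (Nat.modEq_iff_dvd' (by omega)).1 heq.symm
      obtain ⟨k, hk⟩ := hd
      have hb : ℓ * k < ℓ * 1 := by omega
      have : k < 1 := lt_of_mul_lt_mul_left hb (Nat.zero_le ℓ)
      interval_cases k <;> omega
  have hdisj : ∀ i ∈ I, ∀ j ∈ I, i ≠ j → Disjoint (B i) (B j) := by
    have main : ∀ i ∈ I, ∀ j ∈ I, i < j → Disjoint (B i) (B j) := by
      intro i hi j hj hij
      obtain ⟨h1, h2⟩ := hIkey i hi j hj hij
      have hiℓ : i < ℓ := hIlt i hi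
      have hjℓ : j < ℓ := hIlt j hj
      rw [Finset.disjoint_left]
      intro x hx hx'
      rw [hB] at hx hx'
      obtain ⟨t, ht, rfl⟩ := Finset.mem_image.1 hx
      obtain ⟨s, hs, hts⟩ := Finset.mem_image.1 hx'
      rw [Finset.mem_range] at ht hs
      have hlt : i + t < j + s := by omega
      have heq : (i + t) % ℓ = (j + s) % ℓ := hts.symm
      have hd : ℓ ∣ (j + s) - (i + t) := (Nat.modEq_iff_dvd' (by omega)).1 heq
      obtain ⟨k, hk⟩ := hd
      have hb : ℓ * k < ℓ * 2 := by omega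
      have : k < 2 := lt_of_mul_lt_mul_left hb (Nat.zero_le ℓ)
      interval_cases k <;> omega
    intro i hi j hj hij
    rcases lt_or_gt_of_ne hij with h | h
    · exact main i hi j hj h
    · exact (main j hj i hi h).symm
  have hsub : I.biUnion B ⊆ Finset.range ℓ := by
    intro x hx
    rw [Finset.mem_biUnion] at hx
    obtain ⟨i, _, hx⟩ := hx
    rw [hB] at hx
    obtain ⟨t, _, rfl⟩ := Finset.mem_image.1 hx
    exact Finset.mem_range.2 (Nat.mod_lt _ hℓ0)
  have hcount : I.card * m ≤ ℓ := by
    have h1 : (I.biUnion B).card = ∑ i ∈ I, (B i).card := Finset.card_biUnion hdisj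
    have h2 : ∑ i ∈ I, (B i).card = I.card * m := by
      rw [Finset.sum_congr rfl (fun i _ => hBcard i), Finset.sum_const, smul_eq_mul]
    have h3 : (I.biUnion B).card ≤ ℓ := by
      simpa using Finset.card_le_card hsub
    omega
  rw [← hcardI]
  exact (Nat.le_div_iff_mul_le hm).2 hcount
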